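/- Eventual lower bound on the lower-LIL events: let 0 < η < 1 be real and let γ ≥ 2 be a natural number with (γ−1)/γ > η. Set n_r = γ^r, D_r(X) = S_{n_r}(X) − S_{n_{r−1}}(X), and for r large enough that log log n_r > 0 define A_r = {X ∈ 2^ℕ : D_r(X) − (n_r − n_{r−1})/2 > η·√((n_r/2)·log log n_r)}. Then there exists R ∈ ℕ such that for all r ≥ R, μ(A_r) > 1/r. -/

import Mathlib

open MeasureTheory Filter

/-- The sum of the first `n` coordinates of a point of Cantor space, as a real number. -/
noncomputable def coinSum (X : ℕ → Bool) (n : ℕ) : ℝ :=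
  ∑ i ∈ Finset.range n, ((X i).toNat : ℝ)

/-- `μ` is the fair-coin measure on Cantor space: the probability measure under which the
coordinates are i.i.d. Bernoulli(1/2), i.e. every finite cylinder determined by prescribing
the coordinates in a finite set `s` has measure `(1/2)^|s|`. -/
def IsFairCoin (μ : Measure (ℕ → Bool)) : Prop :=
  IsProbabilityMeasure μ ∧
    ∀ (s : Finset ℕ) (f : ℕ → Bool),
      μ {X | ∀ i ∈ s, X i = f i} = (1 / 2) ^ s.card
/-- The block increment `D_r(X) = S_{γ^r}(X) − S_{γ^{r−1}}(X)`. -/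
noncomputable def blockIncr (γ : ℕ) (r : ℕ) (X : ℕ → Bool) : ℝ :=
  coinSum X (γ ^ r) - coinSum X (γ ^ (r - 1))

/-- The lower-LIL event `A_r` for parameters `η` and `γ`, with `n_r = γ^r`:
the set of `X` with `D_r(X) − (n_r − n_{r−1})/2 > η √((n_r/2) log log n_r)`. -/
def lowerLILEvent (η : ℝ) (γ : ℕ) (r : ℕ) : Set (ℕ → Bool) :=
  {X | η * Real.sqrt ((γ ^ r / 2) * Real.log (Real.log (γ ^ r)))
        < blockIncr γ r X - ((γ ^ r : ℕ) - (γ ^ (r - 1) : ℕ) : ℝ) / 2}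

/-!
`D_r` counts the heads among the `m = n_r - n_{r-1}` coins of the block `[n_{r-1}, n_r)`, so
`A_r` contains the outcomes with `k, k + 1, …, k + √m` heads there, `k` the least integer above
`m/2 + t`, `t = η √((n_r/2) log log n_r)`. With `d = k + √m - ⌊m/2⌋ ≤ t + √m + 2`, each of these
`√m` binomial coefficients is at least `C(m, ⌊m/2⌋) e^{-2d²/m - 32d³/m²}` (multiply the ratios
`C(m, j+1)/C(m, j) ≥ 1 - (4(j - ⌊m/2⌋) + 2)/m`), and `C(m, ⌊m/2⌋) ≥ 2^m/(4√m)`, so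
`μ(A_r) ≥ e^{-2d²/m - 32d³/m²}/4`. Now `2t²/m = c log log n_r` with `c = η²γ/(γ-1) < 1`; the
cubic term is `O(1)` because `n_r` grows exponentially, and `√m + 2` only costs a factor
`1 + ε` on `t²` plus `O(1)` (AM-GM). Hence `μ(A_r) ≳ r^{-(1+c)/2}`, which beats `1/r`.
-/

open Real Finset
open scoped ENNReal

theorem Real.exp_neg_add_two_mul_sq_le_one_sub {y : ℝ} (hy : y ≤ 1 / 2) :
    exp (-(y + 2 * y ^ 2)) ≤ 1 - y := by
  rw [exp_neg, inv_le_iff_one_le_mul₀ (exp_pos _)]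
  nlinarith [add_one_le_exp (y + 2 * y ^ 2)]

theorem add_sq_le_one_add_mul_sq_add {ε : ℝ} (hε : 0 < ε) (a b : ℝ) :
    (a + b) ^ 2 ≤ (1 + ε) * a ^ 2 + (1 + ε⁻¹) * b ^ 2 := by
  have h : 0 ≤ (ε * a - b) ^ 2 / ε := by positivity
  have h' : (ε * a - b) ^ 2 / ε = ε * a ^ 2 - 2 * a * b + ε⁻¹ * b ^ 2 := by field_simp; ring
  nlinarith

theorem eventually_mul_pow_le_pow {K b : ℝ} (hK : 0 < K) (hb : 1 < b) (k : ℕ) :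
    ∀ᶠ n : ℕ in atTop, K * (n : ℝ) ^ k ≤ b ^ n := by
  filter_upwards [(isLittleO_pow_const_const_pow_of_one_lt (R := ℝ) k hb).bound (inv_pos.mpr hK)]
    with n hn
  rw [Real.norm_of_nonneg (by positivity), Real.norm_of_nonneg (by positivity)] at hn
  rwa [← le_inv_mul_iff₀ hK]

noncomputable def tailExponent (m d : ℝ) : ℝ := 2 * d ^ 2 / m + 32 * d ^ 3 / m ^ 2

theorem tailExponent_mono {m d d' : ℝ} (hm : 0 ≤ m) (hd : 0 ≤ d) (hdd' : d ≤ d') :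
    tailExponent m d ≤ tailExponent m d' := by
  unfold tailExponent
  gcongr

theorem tailExponent_add_le_add_one {m : ℝ} (hm : 0 < m) (d : ℝ) :
    tailExponent m d + ((4 * d + 2) / m + 2 * ((4 * d + 2) / m) ^ 2) ≤
      tailExponent m (d + 1) := by
  have h : tailExponent m (d + 1) -
      (tailExponent m d + ((4 * d + 2) / m + 2 * ((4 * d + 2) / m) ^ 2)) =
        (16 * (2 * d + 1) ^ 2 + 8) / m ^ 2 := by
    unfold tailExponent; field_simp; ring
  have : 0 ≤ (16 * (2 * d + 1) ^ 2 + 8) / m ^ 2 := by positivity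
  linarith

theorem tailExponent_le {m t ε : ℝ} (hm : 9 ≤ m) (hε : 0 < ε)
    (hcube : 32 * (t + √m + 2) ^ 3 ≤ m ^ 2) :
    tailExponent m (t + √m + 2) ≤ (1 + ε) * (2 * t ^ 2 / m) + 6 * (1 + ε⁻¹) + 1 := by
  have hm0 : 0 < m := by linarith
  have hsqrt : 3 ≤ √m := Real.le_sqrt_of_sq_le (by linarith)
  have hw : (√m + 2) ^ 2 ≤ 3 * m := by nlinarith [Real.sq_sqrt hm0.le]
  have hquad : 2 * (t + √m + 2) ^ 2 / m ≤ (1 + ε) * (2 * t ^ 2 / m) + 6 * (1 + ε⁻¹) := by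
    rw [div_le_iff₀ hm0, add_mul, mul_assoc, div_mul_cancel₀ _ hm0.ne', add_assoc]
    nlinarith [add_sq_le_one_add_mul_sq_add hε t (√m + 2), (by positivity : 0 ≤ ε⁻¹)]
  have hcubic : 32 * (t + √m + 2) ^ 3 / m ^ 2 ≤ 1 := by rwa [div_le_one (by positivity)]
  unfold tailExponent
  linarith

namespace Nat

theorem sixteen_pow_le_four_mul_self_mul_centralBinom_sq {n : ℕ} (hn : 0 < n) :
    16 ^ n ≤ 4 * n * n.centralBinom ^ 2 := by
  induction n with
  | zero => omega
  | succ k ih =>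
    rcases k.eq_zero_or_pos with rfl | hk
    · decide
    refine Nat.le_of_mul_le_mul_left ?_ k.succ_pos
    calc (k + 1) * 16 ^ (k + 1) ≤ (k + 1) * 16 * (4 * k * k.centralBinom ^ 2) := by
          rw [pow_succ, mul_assoc, mul_comm (16 ^ k)]; gcongr; exact ih hk
      _ = 64 * (k * (k + 1)) * k.centralBinom ^ 2 := by ring
      _ ≤ 16 * (2 * k + 1) ^ 2 * k.centralBinom ^ 2 := by gcongr ?_ * _; nlinarith
      _ = 4 * ((k + 1) * (k + 1).centralBinom) ^ 2 := by rw [succ_mul_centralBinom_succ]; ring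
      _ = (k + 1) * (4 * (k + 1) * (k + 1).centralBinom ^ 2) := by ring

theorem two_pow_le_four_mul_sqrt_mul_choose_half {m : ℕ} (hm : 0 < m) :
    (2 : ℝ) ^ m ≤ 4 * √m * m.choose (m / 2) := by
  suffices h : 4 ^ m ≤ 16 * m * m.choose (m / 2) ^ 2 by
    have h' : ((2 : ℝ) ^ m) ^ 2 ≤ (4 * √m * m.choose (m / 2)) ^ 2 := by
      rw [mul_pow, mul_pow, sq_sqrt m.cast_nonneg, ← pow_mul, mul_comm m, pow_mul]
      exact_mod_cast (by linarith : 4 ^ m ≤ 4 ^ 2 * m * m.choose (m / 2) ^ 2)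
    exact (pow_le_pow_iff_left₀ (by positivity) (by positivity) two_ne_zero).mp h'
  obtain ⟨n, rfl | rfl⟩ := m.even_or_odd'
  · have h := sixteen_pow_le_four_mul_self_mul_centralBinom_sq (by omega : 0 < n)
    rw [centralBinom_eq_two_mul_choose] at h
    rw [Nat.mul_div_cancel_left n two_pos, pow_mul]
    norm_num
    nlinarith
  · rcases n.eq_zero_or_pos with rfl | hn
    · decide
    have h := sixteen_pow_le_four_mul_self_mul_centralBinom_sq hn
    have hmono : (2 * n).choose n ^ 2 ≤ (2 * n + 1).choose n ^ 2 :=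
      Nat.pow_le_pow_left (choose_le_choose n (by omega)) 2
    rw [centralBinom_eq_two_mul_choose] at h
    rw [show (2 * n + 1) / 2 = n by omega, pow_succ, pow_mul]
    norm_num
    nlinarith

theorem choose_le_choose_of_half_le {m a b : ℕ} (ha : m ≤ 2 * a) (hab : a ≤ b) :
    m.choose b ≤ m.choose a := by
  induction b, hab using Nat.le_induction with
  | base => rfl
  | succ b hab ih =>
    refine le_trans (Nat.le_of_mul_le_mul_right ?_ b.succ_pos) ih
    rw [choose_succ_right_eq]
    exact Nat.mul_le_mul_left _ (by omega)

theorem one_sub_mul_choose_half_add_le {m d : ℕ} (hd : m / 2 + d < m) :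
    (1 - (4 * d + 2 : ℝ) / m) * m.choose (m / 2 + d) ≤ m.choose (m / 2 + d + 1) := by
  set k := m / 2 + d
  have hm : (0 : ℝ) < m := by exact_mod_cast (by omega : 0 < m)
  have hk₁ : 2 * (k : ℝ) ≤ m + 2 * d := by exact_mod_cast (by omega : 2 * k ≤ m + 2 * d)
  have hk₂ : (m : ℝ) + 2 * d ≤ 2 * k + 1 := by exact_mod_cast (by omega : m + 2 * d ≤ 2 * k + 1)
  have hrec : (m.choose (k + 1) : ℝ) * (k + 1) = m.choose k * (m - k) := by
    rw [← Nat.cast_sub hd.le]; exact_mod_cast choose_succ_right_eq m k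
  have hfac : (1 - (4 * d + 2 : ℝ) / m) * (k + 1) ≤ m - k := by
    rw [one_sub_div hm.ne', div_mul_eq_mul_div, div_le_iff₀ hm]
    nlinarith [mul_le_mul_of_nonneg_left hk₁ hm.le]
  refine le_of_mul_le_mul_right ?_ (by positivity : (0 : ℝ) < k + 1)
  calc (1 - (4 * d + 2 : ℝ) / m) * m.choose k * (k + 1)
      = ((1 - (4 * d + 2 : ℝ) / m) * (k + 1)) * m.choose k := by ring
    _ ≤ (m - k) * m.choose k := by gcongr
    _ = m.choose (k + 1) * (k + 1) := by rw [hrec]; ring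

theorem choose_half_mul_exp_le {m d : ℕ} (hd : 8 * d ≤ m) :
    m.choose (m / 2) * exp (-tailExponent m d) ≤ m.choose (m / 2 + d) := by
  induction d with
  | zero => simp [tailExponent]
  | succ d ih =>
    have hm : (0 : ℝ) < m := by exact_mod_cast (by omega : 0 < m)
    set z : ℝ := (4 * d + 2 : ℝ) / m
    have hz : z ≤ 1 / 2 := by
      rw [div_le_iff₀ hm]
      have : (2 * (4 * d + 2) : ℝ) ≤ m := by exact_mod_cast (by omega : 2 * (4 * d + 2) ≤ m)
      linarith
    have hexp : exp (-tailExponent m (d + 1 : ℕ)) ≤ exp (-tailExponent m d) * (1 - z) :=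
      calc exp (-tailExponent m (d + 1 : ℕ)) ≤ exp (-tailExponent m d + -(z + 2 * z ^ 2)) := by
            push_cast
            gcongr
            linarith [tailExponent_add_le_add_one hm d]
        _ ≤ exp (-tailExponent m d) * (1 - z) := by
            rw [exp_add]; gcongr; exact exp_neg_add_two_mul_sq_le_one_sub hz
    calc m.choose (m / 2) * exp (-tailExponent m (d + 1 : ℕ))
        ≤ m.choose (m / 2) * exp (-tailExponent m d) * (1 - z) := by
          rw [mul_assoc]; gcongr
      _ ≤ (1 - z) * m.choose (m / 2 + d) := by
          rw [mul_comm _ (1 - z)]; gcongr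
          · linarith
          · exact ih (by omega)
      _ ≤ m.choose (m / 2 + (d + 1)) := one_sub_mul_choose_half_add_le (by omega)

theorem exp_neg_tailExponent_mul_two_pow_le_sum_choose {m k : ℕ} {δ : ℝ} (hm : 0 < m)
    (hmk : m ≤ 2 * k) (hδ : ((k + m.sqrt - m / 2 : ℕ) : ℝ) ≤ δ) (h8 : 8 * δ ≤ m) :
    exp (-tailExponent m δ) / 4 * 2 ^ m ≤ ∑ j ∈ Icc k (k + m.sqrt), (m.choose j : ℝ) := by
  set D := m.sqrt
  set d := k + D - m / 2
  have hkd : k + D = m / 2 + d := by omega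
  have hD : √m ≤ D + 1 := by
    rw [sqrt_le_left (by positivity)]; exact_mod_cast (lt_succ_sqrt' m).le
  have hwindow : ((D + 1) * m.choose (k + D) : ℝ) ≤ ∑ j ∈ Icc k (k + D), (m.choose j : ℝ) := by
    have := card_nsmul_le_sum (Icc k (k + D)) (fun j => (m.choose j : ℝ)) (m.choose (k + D))
      fun j hj => by
        obtain ⟨hkj, hjD⟩ := mem_Icc.mp hj
        exact_mod_cast choose_le_choose_of_half_le (by omega) hjD
    rwa [card_Icc, show k + D + 1 - k = D + 1 by omega, nsmul_eq_mul, cast_add_one] at this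
  calc exp (-tailExponent m δ) / 4 * 2 ^ m
      ≤ exp (-tailExponent m δ) / 4 * (4 * √m * m.choose (m / 2)) := by
        gcongr; exact two_pow_le_four_mul_sqrt_mul_choose_half hm
    _ = √m * m.choose (m / 2) * exp (-tailExponent m δ) := by ring
    _ ≤ √m * m.choose (m / 2) * exp (-tailExponent m d) := by
        gcongr; exact tailExponent_mono (by positivity) (by positivity) hδ
    _ ≤ (D + 1) * m.choose (k + D) := by
        rw [mul_assoc, hkd]
        gcongr
        exact choose_half_mul_exp_le (by exact_mod_cast (by linarith : 8 * (d : ℝ) ≤ m))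
    _ ≤ _ := hwindow

end Nat

theorem sum_toNat_eq_card_of_eq_decide {s T : Finset ℕ} (hT : T ⊆ s) {X : ℕ → Bool}
    (hX : ∀ i ∈ s, X i = decide (i ∈ T)) : ∑ i ∈ s, ((X i).toNat : ℝ) = #T := by
  have h (i) (hi : i ∈ s) : ((X i).toNat : ℝ) = if i ∈ T then 1 else 0 := by
    rw [hX i hi]; split_ifs <;> simp_all
  rw [sum_congr rfl h, sum_boole, filter_mem_eq_inter, inter_eq_right.mpr hT]

namespace IsFairCoin

variable {μ : Measure (ℕ → Bool)}

theorem measure_biUnion_eq_card_mul (hμ : IsFairCoin μ) {s : Finset ℕ} {𝒯 : Finset (Finset ℕ)}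
    (h𝒯 : ∀ T ∈ 𝒯, T ⊆ s) :
    μ (⋃ T ∈ 𝒯, {X | ∀ i ∈ s, X i = decide (i ∈ T)}) = #𝒯 * (1 / 2) ^ #s := by
  have hdisj : (𝒯 : Set (Finset ℕ)).PairwiseDisjoint
      fun T => {X : ℕ → Bool | ∀ i ∈ s, X i = decide (i ∈ T)} := by
    intro T hT T' hT' hne
    refine Set.disjoint_left.mpr fun X hX hX' => hne <| ext fun i => ?_
    by_cases hi : i ∈ s
    · simpa using (hX i hi).symm.trans (hX' i hi)
    · exact iff_of_false (fun h => hi (h𝒯 T hT h)) (fun h => hi (h𝒯 T' hT' h))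
  have hmeas (T : Finset ℕ) : MeasurableSet {X : ℕ → Bool | ∀ i ∈ s, X i = decide (i ∈ T)} :=
    MeasurableSet.pi s.countable_toSet fun i _ => measurableSet_singleton _
  rw [measure_biUnion_finset hdisj fun T _ => hmeas T]
  simp [hμ.2]

theorem sum_choose_mul_le_measure (hμ : IsFairCoin μ) (s : Finset ℕ) (k l : ℕ) :
    (∑ j ∈ Icc k l, (#s).choose j : ℝ≥0∞) * (1 / 2) ^ #s ≤
      μ {X | (k : ℝ) ≤ ∑ i ∈ s, ((X i).toNat : ℝ)} := by
  set 𝒯 := (Icc k l).biUnion fun j => powersetCard j s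
  have h𝒯 : ∀ T ∈ 𝒯, T ⊆ s ∧ k ≤ #T := by
    intro T hT
    obtain ⟨j, hj, hT⟩ := mem_biUnion.mp hT
    obtain ⟨hTs, rfl⟩ := mem_powersetCard.mp hT
    exact ⟨hTs, (mem_Icc.mp hj).1⟩
  have hcard : #𝒯 = ∑ j ∈ Icc k l, (#s).choose j := by
    rw [card_biUnion fun i _ j _ hij => pairwise_disjoint_powersetCard s hij]
    simp
  calc (∑ j ∈ Icc k l, (#s).choose j : ℝ≥0∞) * (1 / 2) ^ #s
      = μ (⋃ T ∈ 𝒯, {X | ∀ i ∈ s, X i = decide (i ∈ T)}) := by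
        rw [hμ.measure_biUnion_eq_card_mul fun T hT => (h𝒯 T hT).1, hcard]; push_cast; rfl
    _ ≤ _ := by
        refine measure_mono (Set.iUnion₂_subset fun T hT X hX => ?_)
        simp only [Set.mem_ofPred_eq, sum_toNat_eq_card_of_eq_decide (h𝒯 T hT).1 hX]
        exact_mod_cast (h𝒯 T hT).2

theorem ofReal_exp_div_four_le_measure (hμ : IsFairCoin μ) (s : Finset ℕ) {t : ℝ} (ht : 0 ≤ t)
    (hs : 8 * (t + √(#s : ℝ) + 2) ≤ #s) :
    ENNReal.ofReal (exp (-tailExponent #s (t + √(#s : ℝ) + 2)) / 4) ≤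
      μ {X | (#s : ℝ) / 2 + t < ∑ i ∈ s, ((X i).toNat : ℝ)} := by
  set m := #s
  set k := ⌊(m : ℝ) / 2 + t⌋₊ + 1
  have hk : (m : ℝ) / 2 + t < k := by push_cast [k]; exact Nat.lt_floor_add_one _
  have hk' : (k : ℝ) ≤ m / 2 + t + 1 := by
    push_cast [k]; linarith [Nat.floor_le (by positivity : 0 ≤ (m : ℝ) / 2 + t)]
  have hm : 0 < m := by exact_mod_cast (by positivity : (0 : ℝ) < 8 * (t + √m + 2)).trans_le hs
  have hδ : ((k + m.sqrt - m / 2 : ℕ) : ℝ) ≤ t + √m + 2 := by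
    have hk₀ : m / 2 ≤ k := by
      have : ((m / 2 : ℕ) : ℝ) ≤ m / 2 := Nat.cast_div_le
      exact_mod_cast (by linarith : ((m / 2 : ℕ) : ℝ) ≤ k)
    have h₁ : (m : ℝ) ≤ 2 * (m / 2 : ℕ) + 1 := by exact_mod_cast (by omega : m ≤ 2 * (m / 2) + 1)
    have h₂ : (m.sqrt : ℝ) ≤ √m := Real.le_sqrt_of_sq_le (by exact_mod_cast m.sqrt_le')
    rw [Nat.cast_sub (by omega)]; push_cast; linarith
  have hsum := Nat.exp_neg_tailExponent_mul_two_pow_le_sum_choose hm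
    (by exact_mod_cast (by linarith : (m : ℝ) ≤ 2 * k)) hδ hs
  calc ENNReal.ofReal (exp (-tailExponent m (t + √m + 2)) / 4)
      ≤ (∑ j ∈ Icc k (k + m.sqrt), m.choose j : ℝ≥0∞) * (1 / 2) ^ m := by
        refine (ENNReal.ofReal_le_ofReal ((le_div_iff₀ (by positivity)).mpr hsum)).trans_eq ?_
        rw [div_eq_mul_inv, ENNReal.ofReal_mul (by positivity), ← Nat.cast_sum,
          ENNReal.ofReal_natCast, ENNReal.ofReal_inv_of_pos (by positivity),
          ENNReal.ofReal_pow zero_le_two, ENNReal.ofReal_ofNat, one_div, ENNReal.inv_pow]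
        push_cast; rfl
    _ ≤ μ {X | (k : ℝ) ≤ ∑ i ∈ s, ((X i).toNat : ℝ)} := hμ.sum_choose_mul_le_measure s _ _
    _ ≤ _ := measure_mono fun X hX => hk.trans_le hX

end IsFairCoin

-- `10 ^ 9` is any constant above `16 * 1024 * 18 ^ 3`.
theorem eight_mul_le_and_cube_le {m N x t : ℝ} (hmN : m ≤ N) (hNm : N ≤ 2 * m) (hx : 1 ≤ x)
    (hN : 10 ^ 9 * x ^ 3 ≤ N) (ht : 0 ≤ t) (ht2 : t ^ 2 ≤ N * x) :
    8 * (t + √m + 2) ≤ m ∧ 32 * (t + √m + 2) ^ 3 ≤ m ^ 2 := by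
  have hm : 0 ≤ m := by nlinarith
  have hx3 : x ≤ x ^ 3 := by
    nlinarith [mul_nonneg (mul_nonneg (by linarith : 0 ≤ x - 1) (by linarith : 0 ≤ x))
      (by linarith : 0 ≤ x + 1)]
  have hN1 : 1 ≤ N := by linarith
  set δ := t + √m + 2
  have hδ : 0 ≤ δ := by positivity
  have hδ2 : δ ^ 2 ≤ 18 * N * x := by
    have := Real.sq_sqrt hm
    nlinarith [sq_nonneg (t - √m), sq_nonneg (t - 2), sq_nonneg (√m - 2)]
  constructor
  · refine (pow_le_pow_iff_left₀ (by positivity) hm two_ne_zero).mp ?_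
    nlinarith
  · refine (pow_le_pow_iff_left₀ (by positivity) (by positivity) two_ne_zero).mp ?_
    have hm4 : N ^ 4 ≤ 16 * m ^ 4 := by
      have := pow_le_pow_left₀ (by positivity) hNm 4; linarith
    calc (32 * δ ^ 3) ^ 2 = 1024 * (δ ^ 2) ^ 3 := by ring
      _ ≤ 1024 * (18 * N * x) ^ 3 := by gcongr
      _ = 1024 * 5832 * N ^ 3 * x ^ 3 := by ring
      _ ≤ N ^ 3 * (10 ^ 9 * x ^ 3) / 16 := by nlinarith [pow_pos (by linarith : (0:ℝ) < N) 3]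
      _ ≤ N ^ 3 * N / 16 := by gcongr
      _ ≤ (m ^ 2) ^ 2 := by nlinarith

def block (γ r : ℕ) : Finset ℕ := Ico (γ ^ (r - 1)) (γ ^ r)

noncomputable def lilThreshold (η : ℝ) (γ r : ℕ) : ℝ :=
  η * √((γ ^ r / 2) * log (log (γ ^ r)))

theorem lilThreshold_nonneg {η : ℝ} (hη : 0 ≤ η) (γ r : ℕ) : 0 ≤ lilThreshold η γ r :=
  mul_nonneg hη (sqrt_nonneg _)

theorem lowerLILEvent_eq (η : ℝ) {γ : ℕ} (hγ : 0 < γ) (r : ℕ) :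
    lowerLILEvent η γ r =
      {X | (#(block γ r) : ℝ) / 2 + lilThreshold η γ r < ∑ i ∈ block γ r, ((X i).toNat : ℝ)} := by
  have hle : γ ^ (r - 1) ≤ γ ^ r := Nat.pow_le_pow_right hγ (Nat.sub_le r 1)
  ext X
  simp only [lowerLILEvent, blockIncr, coinSum, block, lilThreshold, Set.mem_ofPred_eq,
    Nat.card_Ico, Nat.cast_sub hle]
  rw [sum_Ico_eq_sub _ hle]
  constructor <;> intro h <;> linarith

theorem natCast_mul_card_block {γ r : ℕ} (hr : r ≠ 0) :
    (γ : ℝ) * #(block γ r) = (γ - 1) * γ ^ r := by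
  obtain ⟨r, rfl⟩ := Nat.exists_eq_add_one_of_ne_zero hr
  rcases γ.eq_zero_or_pos with rfl | hγ
  · simp [block]
  rw [block, Nat.card_Ico, Nat.add_sub_cancel,
    Nat.cast_sub (Nat.pow_le_pow_right hγ (by omega : r ≤ r + 1))]
  push_cast
  ring

theorem Real.log_log_pow {γ : ℝ} (hγ : 1 < γ) {r : ℕ} (hr : r ≠ 0) :
    log (log (γ ^ r)) = log r + log (log γ) := by
  rw [log_pow, log_mul (by exact_mod_cast hr) (log_pos hγ).ne']

theorem lilThreshold_sq (η : ℝ) (γ r : ℕ) (hL : 0 ≤ log (log ((γ : ℝ) ^ r))) :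
    lilThreshold η γ r ^ 2 = η ^ 2 * (γ ^ r / 2 * log (log (γ ^ r))) := by
  rw [lilThreshold, mul_pow, sq_sqrt (by positivity)]

theorem two_mul_lilThreshold_sq_div_card_block (η : ℝ) {γ r : ℕ} (hγ : 2 ≤ γ) (hr : r ≠ 0)
    (hL : 0 ≤ log (log ((γ : ℝ) ^ r))) :
    2 * lilThreshold η γ r ^ 2 / #(block γ r) = η ^ 2 * γ / (γ - 1) * log (log (γ ^ r)) := by
  have hγ2 : (2 : ℝ) ≤ γ := by exact_mod_cast hγ
  have hmN := natCast_mul_card_block (γ := γ) hr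
  have hm : (#(block γ r) : ℝ) ≠ 0 := by
    intro h; rw [h] at hmN; nlinarith [pow_pos (by linarith : (0 : ℝ) < γ) r]
  have hγ1 : (γ : ℝ) - 1 ≠ 0 := by linarith
  rw [lilThreshold_sq η γ r hL]
  field_simp
  linear_combination (-(η ^ 2 * log (log ((γ : ℝ) ^ r)))) * hmN

theorem eight_mul_le_card_block_and_cube_le {η : ℝ} {γ r : ℕ} (hη0 : 0 ≤ η) (hη1 : η ≤ 1)
    (hγ : 2 ≤ γ) (hr : r ≠ 0) (hL : 0 ≤ log (log ((γ : ℝ) ^ r)))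
    (hN : 10 ^ 9 * (γ : ℝ) ^ 3 * r ^ 3 ≤ γ ^ r) :
    8 * (lilThreshold η γ r + √(#(block γ r) : ℝ) + 2) ≤ #(block γ r) ∧
      32 * (lilThreshold η γ r + √(#(block γ r) : ℝ) + 2) ^ 3 ≤ (#(block γ r) : ℝ) ^ 2 := by
  have hγ2 : (2 : ℝ) ≤ γ := by exact_mod_cast hγ
  have hr1 : (1 : ℝ) ≤ r := by exact_mod_cast Nat.one_le_iff_ne_zero.mpr hr
  have hmN := natCast_mul_card_block (γ := γ) hr
  have hN0 : (0 : ℝ) ≤ γ ^ r := by positivity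
  have hLx : log (log ((γ : ℝ) ^ r)) ≤ r * γ := by
    rw [log_pow]
    calc log (r * log γ) ≤ r * log γ := log_le_self (by positivity)
      _ ≤ r * γ := by gcongr; exact (log_le_sub_one_of_pos (by positivity)).trans (by linarith)
  refine eight_mul_le_and_cube_le (N := γ ^ r) (x := r * γ) ?_ ?_ (by nlinarith)
    (by rw [mul_pow]; linarith) (lilThreshold_nonneg hη0 γ r) ?_
  · exact le_of_mul_le_mul_left (by nlinarith) (by linarith : (0 : ℝ) < γ)
  · exact le_of_mul_le_mul_left (by nlinarith [mul_nonneg (by linarith : (0 : ℝ) ≤ γ - 2) hN0])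
      (by linarith : (0 : ℝ) < γ)
  · rw [lilThreshold_sq η γ r hL]
    calc η ^ 2 * (γ ^ r / 2 * log (log ((γ : ℝ) ^ r))) ≤ 1 * (γ ^ r * log (log ((γ : ℝ) ^ r))) := by
          gcongr ?_ * ?_ <;> nlinarith
      _ ≤ γ ^ r * (r * γ) := by rw [one_mul]; gcongr

theorem eventually_one_div_lt_exp_neg_tailExponent {η : ℝ} {γ : ℕ} (hη0 : 0 < η) (hη1 : η < 1)
    (hγ : 2 ≤ γ) (hγη : η < ((γ : ℝ) - 1) / γ) :
    ∀ᶠ r : ℕ in atTop,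
      8 * (lilThreshold η γ r + √(#(block γ r) : ℝ) + 2) ≤ #(block γ r) ∧
      1 / (r : ℝ) <
        exp (-tailExponent #(block γ r) (lilThreshold η γ r + √(#(block γ r) : ℝ) + 2)) / 4 := by
  have hγ1 : (1 : ℝ) < γ := by exact_mod_cast hγ
  set c := η ^ 2 * γ / (γ - 1)
  have hc : 0 < c := by positivity
  have hc1 : c < 1 := by
    rw [lt_div_iff₀ (by linarith)] at hγη
    rw [div_lt_one (by linarith)]
    nlinarith
  set ε := (1 + c) / (2 * c) - 1
  have hε : 0 < ε := by rw [sub_pos, lt_div_iff₀ (by positivity)]; linarith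
  have hεc : (1 + ε) * c = (1 + c) / 2 := by simp only [ε]; field_simp; ring
  set K := (1 + c) / 2 * log (log γ) + 6 * (1 + ε⁻¹) + 1 + log 4 with hK
  have hlog := tendsto_log_atTop.comp tendsto_natCast_atTop_atTop
  filter_upwards [eventually_ne_atTop 0, hlog.eventually_ge_atTop (-log (log γ)),
    hlog.eventually_gt_atTop (2 * K / (1 - c)),
    eventually_mul_pow_le_pow (by positivity : (0 : ℝ) < 10 ^ 9 * γ ^ 3) hγ1 3]
    with r hr hlogr hKr hN
  simp only [Function.comp_apply] at hlogr hKr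
  rw [div_lt_iff₀ (by linarith)] at hKr
  have hLr := log_log_pow hγ1 hr
  have hL : 0 ≤ log (log ((γ : ℝ) ^ r)) := by rw [hLr]; linarith
  obtain ⟨h8, hcube⟩ := eight_mul_le_card_block_and_cube_le hη0.le hη1.le hγ hr hL hN
  refine ⟨h8, ?_⟩
  have hE := tailExponent_le
    (by linarith [lilThreshold_nonneg hη0.le γ r, sqrt_nonneg (#(block γ r) : ℝ)]) hε hcube
  rw [two_mul_lilThreshold_sq_div_card_block η hγ hr hL, ← mul_assoc, hεc, hLr] at hE
  calc 1 / (r : ℝ) = exp (-log r) := by rw [exp_neg, exp_log (by positivity), one_div]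
    _ < exp (-tailExponent #(block γ r) (lilThreshold η γ r + √(#(block γ r) : ℝ) + 2) - log 4) :=
        exp_lt_exp.mpr (by linarith)
    _ = _ := by rw [exp_sub, exp_log (by norm_num)]

/-- Eventual lower bound on the lower-LIL events: for `0 < η < 1` and a natural number
`γ ≥ 2` with `(γ − 1)/γ > η`, there is `R` such that `μ(A_r) > 1/r` for all `r ≥ R`. -/
theorem lowerLILEvent_measure_gt (μ : Measure (ℕ → Bool)) (hμ : IsFairCoin μ)
    (η : ℝ) (hη0 : 0 < η) (hη1 : η < 1)
    (γ : ℕ) (hγ : 2 ≤ γ) (hγη : η < ((γ : ℝ) - 1) / γ) :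
    ∃ R : ℕ, ∀ r : ℕ, R ≤ r →
      1 / (r : ENNReal) < μ (lowerLILEvent η γ r) := by
  refine eventually_atTop.mp ?_
  filter_upwards [eventually_one_div_lt_exp_neg_tailExponent hη0 hη1 hγ hγη, eventually_ne_atTop 0]
    with r ⟨hsize, hlt⟩ hr
  rw [lowerLILEvent_eq η (by omega) r]
  calc 1 / (r : ℝ≥0∞) = ENNReal.ofReal (1 / r) := by
        rw [ENNReal.ofReal_div_of_pos (by positivity), ENNReal.ofReal_one, ENNReal.ofReal_natCast]
    _ < ENNReal.ofReal (exp (-tailExponent #(block γ r)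
          (lilThreshold η γ r + √(#(block γ r) : ℝ) + 2)) / 4) :=
        (ENNReal.ofReal_lt_ofReal_iff (by positivity)).mpr hlt
    _ ≤ _ := hμ.ofReal_exp_div_four_le_measure _ (lilThreshold_nonneg hη0.le γ r) hsize
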